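/- If Q is a commutative quandle (x*y = y*x for all x,y), then the natural map θ : Q → G_Q is injective; similarly if Q is a latin quandle (for all x,y there is a unique z with x = y*z), then θ is injective. -/
import Mathlib

open Quandles

lemma act_eq_of_theta_eq {Q : Type*} [Quandle Q] {x y : Q}
    (h : (Rack.toEnvelGroup Q x : Rack.EnvelGroup Q) = Rack.toEnvelGroup Q y) :
    ∀ z : Q, x ◃ z = y ◃ z := by
  intro z
  rw [← Rack.envelAction_prop x z, ← Rack.envelAction_prop y z, h]

/-- If `Q` is a commutative quandle (`x * y = y * x` for all `x, y`), then the natural map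
`θ : Q → G_Q` to its enveloping group is injective; similarly, if `Q` is a latin quandle
(for all `x, y` there is a unique `z` with `x = y * z`, i.e. `x = z ◃ y`), then `θ` is
injective. -/
theorem commutative_or_latin_toEnvelGroup_injective (Q : Type*) [Quandle Q] :
    ((∀ x y : Q, x ◃ y = y ◃ x) →
      Function.Injective (fun x : Q => (Rack.toEnvelGroup Q x : Rack.EnvelGroup Q))) ∧
    ((∀ x y : Q, ∃! z : Q, x = z ◃ y) →
      Function.Injective (fun x : Q => (Rack.toEnvelGroup Q x : Rack.EnvelGroup Q))) := by
  constructor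
  · intro hcomm x y h
    have hz := act_eq_of_theta_eq h
    -- x = x ◃ x = y ◃ x = x ◃ y, so by injectivity of act x, y = x
    have h1 : x ◃ y = x ◃ x := by
      rw [hcomm x y, ← hz x]
    exact ((Rack.act' x).injective h1).symm
  · intro hlatin x y h
    have hz := act_eq_of_theta_eq h
    -- y = y ◃ y = x ◃ y, and y = y ◃ y; uniqueness gives x = y
    obtain ⟨z, -, huniq⟩ := hlatin y y
    have h1 : y = x ◃ y := by rw [hz y, Quandle.fix]
    have h2 : y = y ◃ y := (Quandle.fix (x := y)).symm
    rw [huniq x h1, huniq y h2]
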